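/- arXiv:math/0312363 — 2 statements merged into one kernel-verified Lean document; each statement's English description precedes it below -/
import Mathlib

section
/- For every θ with 0 < θ < π, the function G_θ(x) := F_θ(x) + F_θ(−x) is twice differentiable on ℝ with second derivative G_θ''(x) = sin θ / (cosh x − cos θ), which is strictly positive for every x; consequently G_θ is strictly convex on ℝ. -/
open MeasureTheory

open Real

/-- `f θ x = −arg(1 − e^{x+iθ})`, the circle pattern angle function. -/
noncomputable def f (θ x : ℝ) : ℝ := -(1 - Complex.exp (x + θ * Complex.I)).arg

lemma f_eq {θ : ℝ} (hs : 0 < Real.sin θ) (x : ℝ) :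
    f θ x = π / 2 - Real.arctan ((Real.exp (-x) - Real.cos θ) / Real.sin θ) := by
  set u : ℝ := (Real.exp (-x) - Real.cos θ) / Real.sin θ with hu
  set φ : ℝ := Real.arctan u - π / 2 with hφ
  have hφ1 : -π < φ := by
    have := Real.neg_pi_div_two_lt_arctan u
    have := Real.pi_pos
    rw [hφ]; linarith
  have hφ2 : φ ≤ π := by
    have := Real.arctan_lt_pi_div_two u
    have := Real.pi_pos
    rw [hφ]; linarith
  have hsq : (0:ℝ) < Real.sqrt (1 + u ^ 2) := Real.sqrt_pos.2 (by positivity)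
  have hc : Real.cos φ = u / Real.sqrt (1 + u ^ 2) := by
    rw [show φ = -(π / 2 - Real.arctan u) by rw [hφ]; ring, Real.cos_neg,
      Real.cos_pi_div_two_sub, Real.sin_arctan]
  have hsn : Real.sin φ = -(1 / Real.sqrt (1 + u ^ 2)) := by
    rw [show φ = -(π / 2 - Real.arctan u) by rw [hφ]; ring, Real.sin_neg,
      Real.sin_pi_div_two_sub, Real.cos_arctan]
  have hr : (0:ℝ) < Real.exp x * Real.sin θ * Real.sqrt (1 + u ^ 2) := by positivity
  have h1 : Real.exp x * Real.sin θ * Real.sqrt (1 + u ^ 2) * Real.cos φ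
      = 1 - Real.exp x * Real.cos θ := by
    rw [hc, hu, Real.exp_neg]
    field_simp
  have h2 : Real.exp x * Real.sin θ * Real.sqrt (1 + u ^ 2) * Real.sin φ
      = -(Real.exp x * Real.sin θ) := by
    rw [hsn]
    field_simp
  have hz : (1 : ℂ) - Complex.exp (x + θ * Complex.I)
      = ((Real.exp x * Real.sin θ * Real.sqrt (1 + u ^ 2) : ℝ) : ℂ)
        * (Real.cos φ + Real.sin φ * Complex.I) := by
    apply Complex.ext
    · simpa [Complex.exp_re, Complex.exp_im, Complex.cos_ofReal_re, Complex.sin_ofReal_re] using h1.symm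
    · simpa [Complex.exp_re, Complex.exp_im, Complex.cos_ofReal_re, Complex.sin_ofReal_re] using h2.symm
  rw [f, hz, Complex.arg_real_mul _ hr, Complex.ofReal_cos, Complex.ofReal_sin,
    Complex.arg_cos_add_sin_mul_I ⟨hφ1, hφ2⟩, hφ]
  ring

lemma abs_cos_lt_one {θ : ℝ} (hs : 0 < Real.sin θ) : |Real.cos θ| < 1 := by
  have h := Real.sin_sq_add_cos_sq θ
  have h2 : Real.cos θ ^ 2 < 1 := by nlinarith
  have := abs_nonneg (Real.cos θ)
  nlinarith [sq_abs (Real.cos θ)]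

lemma f_cont {θ : ℝ} (hs : 0 < Real.sin θ) : Continuous (f θ) := by
  have : f θ = fun x => π / 2 - Real.arctan ((Real.exp (-x) - Real.cos θ) / Real.sin θ) :=
    funext (f_eq hs)
  rw [this]
  exact continuous_const.sub (Real.continuous_arctan.comp
    (((Real.continuous_exp.comp continuous_neg).sub continuous_const).div_const _))

lemma f_nonneg {θ : ℝ} (hs : 0 < Real.sin θ) (x : ℝ) : 0 ≤ f θ x := by
  rw [f_eq hs]
  have := Real.arctan_lt_pi_div_two ((Real.exp (-x) - Real.cos θ) / Real.sin θ)
  linarith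

lemma f_le_pi {θ : ℝ} (hs : 0 < Real.sin θ) (x : ℝ) : f θ x ≤ π := by
  rw [f_eq hs]
  have := Real.neg_pi_div_two_lt_arctan ((Real.exp (-x) - Real.cos θ) / Real.sin θ)
  linarith

lemma f_bound {θ : ℝ} (hs : 0 < Real.sin θ) (x : ℝ) :
    f θ x ≤ max π (Real.sin θ / (1 - |Real.cos θ|)) * Real.exp x := by
  set M := max π (Real.sin θ / (1 - |Real.cos θ|)) with hM
  have habs := abs_cos_lt_one hs
  rcases le_or_gt 0 x with hx | hx
  · have h1 : (1:ℝ) ≤ Real.exp x := Real.one_le_exp hx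
    have h2 : f θ x ≤ π := f_le_pi hs x
    have h3 : (0:ℝ) < π := Real.pi_pos
    have h4 : 0 < M := lt_of_lt_of_le h3 (le_max_left _ _)
    calc f θ x ≤ π := h2
      _ ≤ M := le_max_left _ _
      _ ≤ M * Real.exp x := by nlinarith
  · set u : ℝ := (Real.exp (-x) - Real.cos θ) / Real.sin θ with hu
    have hex : (1:ℝ) ≤ Real.exp (-x) := Real.one_le_exp (by linarith)
    have hlb : Real.exp (-x) * (1 - |Real.cos θ|) / Real.sin θ ≤ u := by
      rw [hu]
      gcongr
      nlinarith [le_abs_self (Real.cos θ), abs_nonneg (Real.cos θ)]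
    have hlb0 : 0 < Real.exp (-x) * (1 - |Real.cos θ|) / Real.sin θ :=
      div_pos (mul_pos (Real.exp_pos _) (by linarith)) hs
    have hu0 : 0 < u := lt_of_lt_of_le hlb0 hlb
    have key : f θ x = Real.arctan u⁻¹ := by
      rw [f_eq hs, Real.arctan_inv_of_pos hu0]
    have h2 : Real.arctan u⁻¹ ≤ u⁻¹ := by
      have h0 : 0 ≤ Real.arctan u⁻¹ := by
        rw [← Real.arctan_zero]
        exact Real.arctan_strictMono.monotone (by positivity)
      have := Real.le_tan h0 (Real.arctan_lt_pi_div_two u⁻¹)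
      rwa [Real.tan_arctan] at this
    have h3 : u⁻¹ ≤ (Real.exp (-x) * (1 - |Real.cos θ|) / Real.sin θ)⁻¹ :=
      inv_anti₀ hlb0 hlb
    have h4 : (Real.exp (-x) * (1 - |Real.cos θ|) / Real.sin θ)⁻¹
        = Real.sin θ / (1 - |Real.cos θ|) * Real.exp x := by
      rw [Real.exp_neg]
      field_simp
    calc f θ x = Real.arctan u⁻¹ := key
      _ ≤ u⁻¹ := h2
      _ ≤ (Real.exp (-x) * (1 - |Real.cos θ|) / Real.sin θ)⁻¹ := h3
      _ = Real.sin θ / (1 - |Real.cos θ|) * Real.exp x := h4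
      _ ≤ M * Real.exp x := by
          apply mul_le_mul_of_nonneg_right (le_max_right _ _) (Real.exp_pos x).le

/-- `F θ x = ∫_{−∞}^x f θ ξ dξ`. -/
noncomputable def F (θ x : ℝ) : ℝ := ∫ ξ in Set.Iic x, f θ ξ

lemma f_integrableOn {θ : ℝ} (hs : 0 < Real.sin θ) (a : ℝ) :
    IntegrableOn (f θ) (Set.Iic a) := by
  apply Integrable.mono' ((integrableOn_exp_Iic a).const_mul
    (max π (Real.sin θ / (1 - |Real.cos θ|))))
  · exact ((f_cont hs).aestronglyMeasurable).restrict
  · filter_upwards with x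
    rw [Real.norm_eq_abs, abs_of_nonneg (f_nonneg hs x)]
    exact f_bound hs x

lemma F_hasDerivAt {θ : ℝ} (hs : 0 < Real.sin θ) (x : ℝ) :
    HasDerivAt (F θ) (f θ x) x := by
  have key : ∀ y : ℝ, F θ y = F θ 0 + ∫ t in (0:ℝ)..y, f θ t := by
    intro y
    have := intervalIntegral.integral_Iic_sub_Iic (f_integrableOn hs 0) (f_integrableOn hs y)
    rw [F, F]
    linarith [this]
  have hii : IntervalIntegrable (f θ) volume 0 x :=
    ((f_cont hs).intervalIntegrable 0 x)
  have h := (intervalIntegral.integral_hasDerivAt_right hii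
    ((f_cont hs).stronglyMeasurable.stronglyMeasurableAtFilter)
    (f_cont hs).continuousAt).const_add (F θ 0)
  exact h.congr_of_eventuallyEq (Filter.Eventually.of_forall key)

lemma g_hasDerivAt {θ : ℝ} (hs : 0 < Real.sin θ) (x : ℝ) :
    HasDerivAt (fun x : ℝ => π / 2 - Real.arctan ((Real.exp (-x) - Real.cos θ) / Real.sin θ))
      (Real.sin θ / (2 * (Real.cosh x - Real.cos θ))) x := by
  have habs := abs_cos_lt_one hs
  have hcosh : Real.cos θ < Real.cosh x := by
    have h1 := Real.one_le_cosh x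
    have := le_abs_self (Real.cos θ)
    linarith
  have h1 : HasDerivAt (fun x : ℝ => (Real.exp (-x) - Real.cos θ) / Real.sin θ)
      (Real.exp (-x) * (-1) / Real.sin θ) x :=
    (((Real.hasDerivAt_exp (-x)).comp x (hasDerivAt_neg x)).sub_const _).div_const _
  have h2 := (Real.hasDerivAt_arctan ((Real.exp (-x) - Real.cos θ) / Real.sin θ)).comp x h1
  have h3 := h2.const_sub (π / 2)
  refine h3.congr_deriv ?_
  symm
  rw [Real.cosh_eq]
  have he : Real.exp (-x) * Real.exp x = 1 := by
    rw [← Real.exp_add]; simp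
  have hd : (0:ℝ) < 1 + ((Real.exp (-x) - Real.cos θ) / Real.sin θ) ^ 2 := by positivity
  have hpyth := Real.sin_sq_add_cos_sq θ
  have h0 : 0 < Real.exp x + Real.exp (-x) - 2 * Real.cos θ := by
    rw [Real.cosh_eq] at hcosh; linarith
  field_simp [h0.ne']
  nlinarith [he, hpyth]

/-- For `0 < θ < π`, the function `G θ x = F θ x + F θ (−x)` is twice differentiable with
second derivative `sin θ / (cosh x − cos θ) > 0`; consequently `G θ` is strictly convex. -/
theorem GTheta_strictly_convex (θ : ℝ) (hθ0 : 0 < θ) (hθπ : θ < Real.pi) :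
    (∃ G' : ℝ → ℝ,
      (∀ x : ℝ, HasDerivAt (fun x : ℝ => F θ x + F θ (-x)) (G' x) x) ∧
      (∀ x : ℝ, HasDerivAt G' (Real.sin θ / (Real.cosh x - Real.cos θ)) x)) ∧
    (∀ x : ℝ, 0 < Real.sin θ / (Real.cosh x - Real.cos θ)) ∧
    StrictConvexOn ℝ Set.univ (fun x : ℝ => F θ x + F θ (-x)) := by
  have hs : 0 < Real.sin θ := Real.sin_pos_of_pos_of_lt_pi hθ0 hθπ
  have habs := abs_cos_lt_one hs
  have hA : ∀ x : ℝ, 0 < Real.cosh x - Real.cos θ := by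
    intro x
    have := Real.one_le_cosh x
    have := le_abs_self (Real.cos θ)
    linarith
  have hpos : ∀ x : ℝ, 0 < Real.sin θ / (Real.cosh x - Real.cos θ) := fun x =>
    div_pos hs (hA x)
  set G' : ℝ → ℝ := fun x => f θ x - f θ (-x) with hG'def
  have hG : ∀ x : ℝ, HasDerivAt (fun x : ℝ => F θ x + F θ (-x)) (G' x) x := by
    intro x
    have h1 := F_hasDerivAt hs x
    have h2 := (F_hasDerivAt hs (-x)).comp x (hasDerivAt_neg x)
    refine (h1.add h2).congr_deriv ?_
    symm
    simp [hG'def]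
    ring
  have hG2 : ∀ x : ℝ, HasDerivAt G' (Real.sin θ / (Real.cosh x - Real.cos θ)) x := by
    intro x
    have hgx := g_hasDerivAt hs x
    have hgnx := (g_hasDerivAt hs (-x)).comp x (hasDerivAt_neg x)
    have hsub := hgx.sub hgnx
    have heq : G' = fun y : ℝ =>
        (fun z : ℝ => π / 2 - Real.arctan ((Real.exp (-z) - Real.cos θ) / Real.sin θ)) y -
        ((fun z : ℝ => π / 2 - Real.arctan ((Real.exp (-z) - Real.cos θ) / Real.sin θ)) ∘
          fun z : ℝ => -z) y := by
      funext y
      simp only [hG'def, Function.comp_apply]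
      rw [f_eq hs, f_eq hs]
    rw [heq]
    refine hsub.congr_deriv ?_
    symm
    rw [Real.cosh_neg]
    field_simp [(hA x).ne']
    ring
  refine ⟨⟨G', hG, hG2⟩, hpos, ?_⟩
  have hdiff : Differentiable ℝ (fun x : ℝ => F θ x + F θ (-x)) := fun x =>
    (hG x).differentiableAt
  apply strictConvexOn_of_deriv2_pos convex_univ hdiff.continuous.continuousOn
  intro x _
  have hd1 : deriv (fun x : ℝ => F θ x + F θ (-x)) = G' := funext fun y => (hG y).deriv
  rw [show deriv^[2] (fun x : ℝ => F θ x + F θ (-x))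
      = deriv (deriv (fun x : ℝ => F θ x + F θ (-x))) from rfl, hd1, (hG2 x).deriv]
  exact hpos x
end

section
/- Let θ satisfy 0 < θ < π, set θ* := π − θ, and let ρ_1 < 0 and ρ_2 < 0 be real numbers. Define φ_1 := f_θ(ρ_2 − ρ_1) − f_θ(ρ_2 + ρ_1) and φ_2 := f_θ(ρ_1 − ρ_2) − f_θ(ρ_1 + ρ_2). Then φ_1 > 0, φ_2 > 0, φ_1 + φ_2 < θ*, and ρ_1 = (1/2)·log[ ( sin((θ* − φ_1 − φ_2)/2) · sin((θ* − φ_1 + φ_2)/2) ) / ( sin((θ* + φ_1 + φ_2)/2) · sin((θ* + φ_1 − φ_2)/2) ) ]. (This is the inverse relation between the half-angles and the transformed radii ρ = log tanh(r/2) of a hyperbolic triangle with two sides r_1, r_2 and included angle θ.) -/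
set_option maxHeartbeats 1000000

lemma f_key (θ : ℝ) (hθ0 : 0 < θ) (hθπ : θ < Real.pi) (x : ℝ) :
    0 < f θ x ∧ f θ x < Real.pi - θ ∧
    Real.sin (f θ x) = Real.exp x * Real.sin (θ + f θ x) := by
  set z : ℂ := 1 - Complex.exp (x + θ * Complex.I) with hzdef
  have hre : z.re = 1 - Real.exp x * Real.cos θ := by
    simp [hzdef, Complex.exp_re]
  have him : z.im = -(Real.exp x * Real.sin θ) := by
    simp [hzdef, Complex.exp_im]
  have hsθ : 0 < Real.sin θ := Real.sin_pos_of_pos_of_lt_pi hθ0 hθπ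
  have himneg : z.im < 0 := by
    rw [him]; nlinarith [Real.exp_pos x]
  have hz0 : z ≠ 0 := fun h => by simp [h] at himneg
  have hargneg : z.arg < 0 := Complex.arg_neg_iff.2 himneg
  have hargπ : -Real.pi < z.arg := Complex.neg_pi_lt_arg z
  have hf0 : 0 < f θ x := by simp only [f, ← hzdef]; linarith
  have hfπ : f θ x < Real.pi := by simp only [f, ← hzdef]; linarith
  -- key identity: z.re * sin (arg z) = z.im * cos (arg z)
  have habs : (0:ℝ) < ‖z‖ := norm_pos_iff.mpr hz0
  have e1 : z.re * Real.sin z.arg = z.im * Real.cos z.arg := by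
    rw [Complex.sin_arg, Complex.cos_arg hz0]
    field_simp
  have hsin : Real.sin (f θ x) = Real.exp x * Real.sin (θ + f θ x) := by
    simp only [f, ← hzdef]
    rw [Real.sin_add, Real.sin_neg, Real.cos_neg]
    rw [hre, him] at e1
    nlinarith [e1]
  refine ⟨hf0, ?_, hsin⟩
  have hsf : 0 < Real.sin (f θ x) := Real.sin_pos_of_pos_of_lt_pi hf0 hfπ
  have hsθf : 0 < Real.sin (θ + f θ x) := by
    nlinarith [Real.exp_pos x]
  by_contra h
  push_neg at h
  have h1 : Real.sin (θ + f θ x) ≤ 0 := by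
    have : Real.sin (θ + f θ x) = -Real.sin (θ + f θ x - Real.pi) := by
      rw [Real.sin_sub_pi]; ring
    rw [this]
    have : 0 ≤ Real.sin (θ + f θ x - Real.pi) :=
      Real.sin_nonneg_of_nonneg_of_le_pi (by linarith) (by linarith)
    linarith
  linarith

lemma f_lt (θ : ℝ) (hθ0 : 0 < θ) (hθπ : θ < Real.pi) {x y : ℝ} (hxy : x < y) :
    f θ x < f θ y := by
  obtain ⟨hu0, huπ, hu⟩ := f_key θ hθ0 hθπ x
  obtain ⟨hv0, hvπ, hv⟩ := f_key θ hθ0 hθπ y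
  set u := f θ x; set v := f θ y
  have hsθ : 0 < Real.sin θ := Real.sin_pos_of_pos_of_lt_pi hθ0 hθπ
  have hsθu : 0 < Real.sin (θ + u) := Real.sin_pos_of_pos_of_lt_pi (by linarith) (by linarith)
  have hsθv : 0 < Real.sin (θ + v) := Real.sin_pos_of_pos_of_lt_pi (by linarith) (by linarith)
  have key : Real.sin θ * Real.sin (u - v) =
      Real.sin u * Real.sin (θ + v) - Real.sin v * Real.sin (θ + u) := by
    rw [Real.sin_sub, Real.sin_add, Real.sin_add]; ring
  have hne : Real.sin θ * Real.sin (u - v) < 0 := by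
    rw [key, hu, hv]
    have : Real.exp x < Real.exp y := Real.exp_lt_exp.2 hxy
    nlinarith [mul_pos hsθu hsθv]
  have hsuv : Real.sin (u - v) < 0 := by nlinarith
  by_contra h
  push_neg at h
  have : 0 ≤ Real.sin (u - v) :=
    Real.sin_nonneg_of_nonneg_of_le_pi (by linarith) (by linarith)
  linarith

lemma f_sum (θ : ℝ) (hθ0 : 0 < θ) (hθπ : θ < Real.pi) (x : ℝ) :
    f θ x + f θ (-x) = Real.pi - θ := by
  obtain ⟨hu0, huπ, hu⟩ := f_key θ hθ0 hθπ x
  obtain ⟨hv0, hvπ, hv⟩ := f_key θ hθ0 hθπ (-x)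
  set u := f θ x; set v := f θ (-x)
  have hsθ : 0 < Real.sin θ := Real.sin_pos_of_pos_of_lt_pi hθ0 hθπ
  have hprod : Real.sin u * Real.sin v = Real.sin (θ + u) * Real.sin (θ + v) := by
    rw [hu, hv]
    have h1 : Real.exp x * Real.exp (-x) = 1 := by
      rw [← Real.exp_add]; simp
    linear_combination Real.sin (θ + u) * Real.sin (θ + v) * h1
  have key : Real.sin (θ + u) * Real.sin (θ + v) - Real.sin u * Real.sin v =
      Real.sin θ * Real.sin (θ + (u + v)) := by
    rw [Real.sin_add θ u, Real.sin_add θ v, Real.sin_add θ (u+v), Real.sin_add u v,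
      Real.cos_add u v]
    linear_combination Real.sin u * Real.sin v * Real.sin_sq_add_cos_sq θ
  have hzero : Real.sin (θ + (u + v)) = 0 := by
    rw [← hprod] at key
    simp at key
    rcases key with h | h
    · linarith
    · exact h
  -- θ + u + v ∈ (0, 2π) and sin = 0 ⇒ = π
  set s := θ + (u + v) with hs
  have hs0 : 0 < s := by positivity
  have hs2 : s < 2 * Real.pi := by
    simp only [hs]; linarith
  rcases lt_trichotomy s Real.pi with h | h | h
  · exfalso
    have := Real.sin_pos_of_pos_of_lt_pi hs0 h
    linarith
  · linarith [hs ▸ h]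
  · exfalso
    have h2 : 0 < Real.sin (s - Real.pi) :=
      Real.sin_pos_of_pos_of_lt_pi (by linarith) (by linarith)
    rw [Real.sin_sub_pi] at h2
    linarith

/-- Inverse relation between the half-angles `φ₁, φ₂` and transformed radii
`ρ = log tanh (r/2)` of a hyperbolic triangle with included angle `θ`. -/
theorem hyperbolic_triangle_inverse_relation (θ : ℝ) (hθ0 : 0 < θ) (hθπ : θ < Real.pi)
    (ρ₁ ρ₂ : ℝ) (hρ₁ : ρ₁ < 0) (hρ₂ : ρ₂ < 0) :
    0 < f θ (ρ₂ - ρ₁) - f θ (ρ₂ + ρ₁) ∧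
    0 < f θ (ρ₁ - ρ₂) - f θ (ρ₁ + ρ₂) ∧
    (f θ (ρ₂ - ρ₁) - f θ (ρ₂ + ρ₁)) + (f θ (ρ₁ - ρ₂) - f θ (ρ₁ + ρ₂)) < Real.pi - θ ∧
    ρ₁ = (1 / 2) * Real.log
      ((Real.sin (((Real.pi - θ) - (f θ (ρ₂ - ρ₁) - f θ (ρ₂ + ρ₁))
            - (f θ (ρ₁ - ρ₂) - f θ (ρ₁ + ρ₂))) / 2) *
        Real.sin (((Real.pi - θ) - (f θ (ρ₂ - ρ₁) - f θ (ρ₂ + ρ₁))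
            + (f θ (ρ₁ - ρ₂) - f θ (ρ₁ + ρ₂))) / 2)) /
       (Real.sin (((Real.pi - θ) + (f θ (ρ₂ - ρ₁) - f θ (ρ₂ + ρ₁))
            + (f θ (ρ₁ - ρ₂) - f θ (ρ₁ + ρ₂))) / 2) *
        Real.sin (((Real.pi - θ) + (f θ (ρ₂ - ρ₁) - f θ (ρ₂ + ρ₁))
            - (f θ (ρ₁ - ρ₂) - f θ (ρ₁ + ρ₂))) / 2))) := by
  have hcomm : f θ (ρ₁ + ρ₂) = f θ (ρ₂ + ρ₁) := by rw [add_comm]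
  have hsum : f θ (ρ₂ - ρ₁) + f θ (ρ₁ - ρ₂) = Real.pi - θ := by
    have := f_sum θ hθ0 hθπ (ρ₂ - ρ₁)
    rwa [show -(ρ₂ - ρ₁) = ρ₁ - ρ₂ by ring] at this
  obtain ⟨ha0, haπ, ha⟩ := f_key θ hθ0 hθπ (ρ₂ - ρ₁)
  obtain ⟨hb0, hbπ, hb⟩ := f_key θ hθ0 hθπ (ρ₂ + ρ₁)
  set a := f θ (ρ₂ - ρ₁) with hadef
  set b := f θ (ρ₂ + ρ₁) with hbdef
  have hba : b < a := f_lt θ hθ0 hθπ (by linarith)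
  have hba2 : b < f θ (ρ₁ - ρ₂) := by
    rw [← hcomm]; exact f_lt θ hθ0 hθπ (by linarith)
  have hA : f θ (ρ₁ - ρ₂) = Real.pi - θ - a := by linarith
  rw [hcomm, hA]
  refine ⟨by linarith, by linarith, by linarith, ?_⟩
  have e1 : (Real.pi - θ - (a - b) - (Real.pi - θ - a - b)) / 2 = b := by ring
  have e2 : (Real.pi - θ - (a - b) + (Real.pi - θ - a - b)) / 2 = Real.pi - (θ + a) := by ring
  have e3 : (Real.pi - θ + (a - b) + (Real.pi - θ - a - b)) / 2 = Real.pi - (θ + b) := by ring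
  have e4 : (Real.pi - θ + (a - b) - (Real.pi - θ - a - b)) / 2 = a := by ring
  rw [e1, e2, e3, e4, Real.sin_pi_sub, Real.sin_pi_sub]
  have hsθa : 0 < Real.sin (θ + a) := Real.sin_pos_of_pos_of_lt_pi (by linarith) (by linarith)
  have hsθb : 0 < Real.sin (θ + b) := Real.sin_pos_of_pos_of_lt_pi (by linarith) (by linarith)
  have hq : Real.sin b * Real.sin (θ + a) / (Real.sin (θ + b) * Real.sin a) =
      Real.exp (2 * ρ₁) := by
    rw [ha, hb, div_eq_iff (by positivity)]
    have hE : Real.exp (ρ₂ + ρ₁) = Real.exp (2 * ρ₁) * Real.exp (ρ₂ - ρ₁) := by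
      rw [← Real.exp_add]; ring_nf
    rw [hE]; ring
  rw [hq, Real.log_exp]
  ring
end
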